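/- arXiv:2212.04397 — 3 statements merged into one kernel-verified Lean document; each statement's English description precedes it below -/
import Mathlib

section
/- Let C > 1, α ∈ (0, 1/4), γ > C(20α)^{1/5} and r > 5/γ. Suppose H is a random subgraph of K_{n,n} that is (Cr/n)-spread. Then H fails to be (α, γr/n)-sparse with probability less than n^{−14}. -/
/-!
Union bound. If `H` is not sparse, some `V` with `|V| ≤ αn` spans more than `|V|γr` edges of `H`,
so `H` contains one of the `C(m, k)` sets of `k = ⌊|V|γr⌋ + 1` pairs inside `V`, where
`m ≤ |V|²/4` is the number of such pairs. By spreadness and `C(m, k) ≤ (3m/k)^k` (as `e < 3`),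
such a `V` contributes at most `(3C|V|/(4γn))^k`. Since `γr > 5` gives `k > 5|V|`, this vanishes
unless `|V|²/4 ≥ k`, i.e. `|V| ≥ 21`, and is at most `(3C|V|/(4γn))^{5|V|}`. Grouping the
`C(2n, v)` sets of each size `v` and using `γ⁵ > 20C⁵α`, each size contributes at most
`(v/n)^{3v} ≤ n^{-15}/4`, and there are `2n + 1` sizes.
-/

open MeasureTheory ProbabilityTheory

noncomputable section

namespace Paper

/-- A factorisation of (the edge set of) a graph into `m` parts:
pairwise disjoint subsets of `H` covering `H`. -/
def IsFactorisation {ι : Type*} [DecidableEq ι] {m : ℕ} (H : Finset ι)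
    (F : Fin m → Finset ι) : Prop :=
  (∀ c, F c ⊆ H) ∧ (∀ c c', c ≠ c' → Disjoint (F c) (F c')) ∧ ∀ e ∈ H, ∃ c, e ∈ F c

/-- Degree of a left vertex in a bipartite graph `H ⊆ K_{n,n}`. -/
def leftDeg (n : ℕ) (H : Finset (Fin n × Fin n)) (u : Fin n) : ℕ :=
  (H.filter fun e => e.1 = u).card

/-- Degree of a right vertex in a bipartite graph `H ⊆ K_{n,n}`. -/
def rightDeg (n : ℕ) (H : Finset (Fin n × Fin n)) (v : Fin n) : ℕ :=
  (H.filter fun e => e.2 = v).card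

/-- `H ⊆ K_{n,n}` is `r`-regular: every vertex of `U₁ ∪ U₂` lies in exactly `r` edges. -/
def IsRegular (n r : ℕ) (H : Finset (Fin n × Fin n)) : Prop :=
  (∀ u, leftDeg n H u = r) ∧ ∀ v, rightDeg n H v = r

/-- `H ⊆ K_{n,n}` has all vertex degrees in the interval `[lo, hi]`. -/
def IsRegularInterval (n : ℕ) (lo hi : ℝ) (H : Finset (Fin n × Fin n)) : Prop :=
  (∀ u, lo ≤ (leftDeg n H u : ℝ) ∧ (leftDeg n H u : ℝ) ≤ hi) ∧
    ∀ v, lo ≤ (rightDeg n H v : ℝ) ∧ (rightDeg n H v : ℝ) ≤ hi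

/-- The edges of `H` with first endpoint in `V₁` and second endpoint in `V₂`. -/
def edgesBetween (n : ℕ) (H : Finset (Fin n × Fin n)) (V₁ V₂ : Finset (Fin n)) :
    Finset (Fin n × Fin n) :=
  H.filter fun e => e.1 ∈ V₁ ∧ e.2 ∈ V₂

/-- `H ⊆ K_{n,n}` is `(δ,p)`-uniform. -/
def IsUniform (n : ℕ) (δ p : ℝ) (H : Finset (Fin n × Fin n)) : Prop :=
  ∀ V₁ V₂ : Finset (Fin n), δ * n ≤ V₁.card → δ * n ≤ V₂.card →
    (1 - δ) * p * V₁.card * V₂.card ≤ ((edgesBetween n H V₁ V₂).card : ℝ) ∧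
      ((edgesBetween n H V₁ V₂).card : ℝ) ≤ (1 + δ) * p * V₁.card * V₂.card

/-- `H ⊆ K_{n,n}` is `(δ,δ',p)`-dense. -/
def IsDenseB (n : ℕ) (δ δ' p : ℝ) (H : Finset (Fin n × Fin n)) : Prop :=
  ∀ V₁ V₂ : Finset (Fin n), δ' * n ≤ V₁.card → δ' * n ≤ V₂.card →
    (1 - δ) * p * V₁.card * V₂.card ≤ ((edgesBetween n H V₁ V₂).card : ℝ)

/-- The edges of `H` with both endpoints in a set `V ⊆ U₁ ∪ U₂` of vertices. -/
def edgesWithin (n : ℕ) (H : Finset (Fin n × Fin n)) (V : Finset (Fin n ⊕ Fin n)) :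
    Finset (Fin n × Fin n) :=
  H.filter fun e => Sum.inl e.1 ∈ V ∧ Sum.inr e.2 ∈ V

/-- `H ⊆ K_{n,n}` is `(α,β)`-sparse. -/
def IsSparse (n : ℕ) (α β : ℝ) (H : Finset (Fin n × Fin n)) : Prop :=
  ∀ V : Finset (Fin n ⊕ Fin n), (V.card : ℝ) ≤ α * n →
    ((edgesWithin n H V).card : ℝ) ≤ V.card * β * n

/-- `H ⊆ K_{n,n}` is `(δ,δ',η,p)`-quasirandom. -/
def IsQuasirandom (n : ℕ) (δ δ' η p : ℝ) (H : Finset (Fin n × Fin n)) : Prop :=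
  IsRegularInterval n ((1 - δ) * p * n) ((1 + δ) * p * n) H ∧
    IsSparse n (3 * δ') (η * p) H ∧ IsDenseB n δ δ' p H

/-- A perfect matching of the vertex set `U₁ ∪ U₂` of `K_{n,n}`. -/
def IsPerfectMatching (n : ℕ) (M : Finset (Fin n × Fin n)) : Prop :=
  IsRegular n 1 M

/-- A 1-factorisation (optimal edge-colouring) of `H ⊆ K_{n,n}`:
a partition of `E(H)` into perfect matchings. -/
def IsOneFactorisation (n : ℕ) {r : ℕ} (H : Finset (Fin n × Fin n))
    (M : Fin r → Finset (Fin n × Fin n)) : Prop :=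
  IsFactorisation H M ∧ ∀ c, IsPerfectMatching n (M c)

open Finset

lemma choose_le_three_mul_div_pow (N k : ℕ) : (N.choose k : ℝ) ≤ (3 * N / k) ^ k := by
  rcases Nat.eq_zero_or_pos k with rfl | hk
  · simp
  have hk' : (0 : ℝ) < k := by exact_mod_cast hk
  have hfact : (k : ℝ) ^ k ≤ 3 ^ k * k.factorial := by
    have h := Real.pow_div_factorial_le_exp (x := k) hk'.le k
    rw [div_le_iff₀ (by positivity)] at h
    calc (k : ℝ) ^ k ≤ Real.exp k * k.factorial := h
      _ = Real.exp 1 ^ k * k.factorial := by rw [← Real.exp_nat_mul, mul_one]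
      _ ≤ 3 ^ k * k.factorial := by
        gcongr; exact Real.exp_one_lt_three.le
  calc (N.choose k : ℝ) ≤ N ^ k / k.factorial := Nat.choose_le_pow_div k N
    _ ≤ N ^ k * 3 ^ k / k ^ k := by
        rw [div_le_div_iff₀ (by positivity) (by positivity)]
        calc (N : ℝ) ^ k * k ^ k ≤ N ^ k * (3 ^ k * k.factorial) := by gcongr
          _ = _ := by ring
    _ = (3 * N / k) ^ k := by rw [div_pow, mul_pow, mul_comm]

lemma pow_four_le_two_pow {v : ℕ} (hv : 16 ≤ v) : v ^ 4 ≤ 2 ^ v := by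
  induction v, hv using Nat.le_induction with
  | base => norm_num
  | succ v hv ih =>
    calc (v + 1) ^ 4 ≤ 2 * v ^ 4 := by nlinarith [Nat.mul_le_mul_right (v ^ 3) hv]
      _ ≤ 2 ^ (v + 1) := by rw [pow_succ' 2 v]; exact Nat.mul_le_mul_left 2 ih

lemma pow_mul_le_pow_of_four_mul_le {v n : ℕ} (hv : 16 ≤ v) (hn : 4 * v ≤ n) :
    v ^ (3 * v) * (4 * n ^ 15) ≤ n ^ (3 * v) := by
  obtain ⟨e, he⟩ : ∃ e, 3 * v = e + 15 := ⟨3 * v - 15, by omega⟩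
  have hv15 : v ^ 15 ≤ 4 ^ (2 * v) :=
    calc v ^ 15 ≤ v ^ 16 := Nat.pow_le_pow_right (by omega) (by omega)
      _ = (v ^ 4) ^ 4 := by ring
      _ ≤ (2 ^ v) ^ 4 := Nat.pow_le_pow_left (pow_four_le_two_pow hv) 4
      _ = 4 ^ (2 * v) := by rw [show (4 : ℕ) = 2 ^ 2 by norm_num, ← pow_mul, ← pow_mul]; ring_nf
  rw [he]
  calc v ^ (e + 15) * (4 * n ^ 15) = 4 * v ^ 15 * v ^ e * n ^ 15 := by ring
    _ ≤ 4 * 4 ^ (2 * v) * v ^ e * n ^ 15 := by gcongr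
    _ ≤ 4 ^ e * v ^ e * n ^ 15 := by
        gcongr
        rw [← pow_succ']
        exact Nat.pow_le_pow_right (by norm_num) (by omega)
    _ = (4 * v) ^ e * n ^ 15 := by rw [mul_pow]
    _ ≤ n ^ e * n ^ 15 := by gcongr
    _ = n ^ (e + 15) := by rw [pow_add]

lemma pow_mul_lt_pow_of_mul_rpow_lt {C a γ : ℝ} {k : ℕ} (hk : k ≠ 0) (hC : 0 ≤ C) (ha : 0 ≤ a)
    (h : C * a ^ ((1 : ℝ) / k) < γ) : C ^ k * a < γ ^ k := by
  have hpow := pow_lt_pow_left₀ h (by positivity) hk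
  rwa [mul_pow, one_div, Real.rpow_inv_natCast_pow ha hk] at hpow

lemma edgesWithin_eq_inter (n : ℕ) (H : Finset (Fin n × Fin n)) (V : Finset (Fin n ⊕ Fin n)) :
    edgesWithin n H V = H ∩ edgesWithin n univ V := by
  rw [edgesWithin, edgesWithin, inter_filter, inter_univ]

lemma edgesWithin_univ (n : ℕ) (V : Finset (Fin n ⊕ Fin n)) :
    edgesWithin n univ V = V.toLeft ×ˢ V.toRight := by
  ext; simp [edgesWithin]

lemma four_mul_card_edgesWithin_univ_le (n : ℕ) (V : Finset (Fin n ⊕ Fin n)) :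
    4 * #(edgesWithin n univ V) ≤ #V ^ 2 := by
  rw [edgesWithin_univ, card_product, ← card_toLeft_add_card_toRight, ← mul_assoc]
  exact four_mul_le_sq_add _ _

lemma measure_le_card_inter_le_choose_mul_pow {ι Ω : Type*} [DecidableEq ι] [MeasurableSpace Ω]
    (μ : Measure Ω) (H : Ω → Finset ι) (q : ℝ)
    (hspread : ∀ S : Finset ι, μ {ω | S ⊆ H ω} ≤ ENNReal.ofReal (q ^ #S)) (P : Finset ι) (k : ℕ) :
    μ {ω | k ≤ #(H ω ∩ P)} ≤ ENNReal.ofReal ((#P).choose k * q ^ k) := by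
  have hcover : {ω | k ≤ #(H ω ∩ P)} ⊆ ⋃ S ∈ P.powersetCard k, {ω | S ⊆ H ω} := by
    intro ω hω
    obtain ⟨S, hS, rfl⟩ := exists_subset_card_eq hω
    exact Set.mem_biUnion (mem_powersetCard.2 ⟨hS.trans inter_subset_right, rfl⟩)
      (hS.trans inter_subset_left)
  calc μ {ω | k ≤ #(H ω ∩ P)} ≤ ∑ S ∈ P.powersetCard k, μ {ω | S ⊆ H ω} :=
        (measure_mono hcover).trans (measure_biUnion_finset_le _ _)
    _ ≤ ∑ S ∈ P.powersetCard k, ENNReal.ofReal (q ^ k) :=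
        sum_le_sum fun S hS => (mem_powersetCard.1 hS).2 ▸ hspread S
    _ = ENNReal.ofReal ((#P).choose k * q ^ k) := by
        rw [sum_const, card_powersetCard, nsmul_eq_mul, ENNReal.ofReal_mul (by positivity),
          ENNReal.ofReal_natCast]

lemma measure_not_isSparse_le {Ω : Type*} [MeasurableSpace Ω] (μ : Measure Ω) {n : ℕ}
    (H : Ω → Finset (Fin n × Fin n)) {q α β : ℝ} (hq : 0 ≤ q) (hβ : 0 ≤ β)
    (hspread : ∀ S : Finset (Fin n × Fin n), μ {ω | S ⊆ H ω} ≤ ENNReal.ofReal (q ^ #S)) :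
    μ {ω | ¬ IsSparse n α β (H ω)} ≤ ENNReal.ofReal
      (∑ V ∈ univ.filter (fun V : Finset (Fin n ⊕ Fin n) => (#V : ℝ) ≤ α * n),
        (#(edgesWithin n univ V)).choose (⌊#V * β * n⌋₊ + 1) * q ^ (⌊#V * β * n⌋₊ + 1)) := by
  set 𝒱 := univ.filter (fun V : Finset (Fin n ⊕ Fin n) => (#V : ℝ) ≤ α * n)
  have hcover : {ω | ¬ IsSparse n α β (H ω)} ⊆
      ⋃ V ∈ 𝒱, {ω | ⌊#V * β * n⌋₊ + 1 ≤ #(H ω ∩ edgesWithin n univ V)} := by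
    intro ω hω
    simp only [IsSparse, Set.mem_ofPred_eq, not_forall, not_le] at hω
    obtain ⟨V, hV, hdense⟩ := hω
    rw [edgesWithin_eq_inter] at hdense
    exact Set.mem_biUnion (mem_filter.2 ⟨mem_univ V, hV⟩)
      ((Nat.floor_lt (by positivity)).2 hdense)
  calc μ {ω | ¬ IsSparse n α β (H ω)}
      ≤ ∑ V ∈ 𝒱, μ {ω | ⌊#V * β * n⌋₊ + 1 ≤ #(H ω ∩ edgesWithin n univ V)} :=
        (measure_mono hcover).trans (measure_biUnion_finset_le _ _)
    _ ≤ ∑ V ∈ 𝒱, ENNReal.ofReal ((#(edgesWithin n univ V)).choose (⌊#V * β * n⌋₊ + 1) *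
          q ^ (⌊#V * β * n⌋₊ + 1)) :=
        sum_le_sum fun V _ => measure_le_card_inter_le_choose_mul_pow μ H q hspread _ _
    _ = _ := (ENNReal.ofReal_sum_of_nonneg fun V _ => by positivity).symm

lemma choose_mul_pow_le_of_four_mul_le_sq {m v k : ℕ} {q t : ℝ} (hq : 0 ≤ q) (ht : 0 < t)
    (hm : 4 * m ≤ v ^ 2) (hk : v * t < k) :
    (m.choose k : ℝ) * q ^ k ≤ (3 * v * q / (4 * t)) ^ k := by
  have hk0 : (0 : ℝ) < k := lt_of_le_of_lt (by positivity) hk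
  have hm' : (4 * m : ℝ) ≤ v ^ 2 := by exact_mod_cast hm
  calc (m.choose k : ℝ) * q ^ k ≤ (3 * m / k) ^ k * q ^ k := by
        gcongr; exact choose_le_three_mul_div_pow m k
    _ = (3 * m * q / k) ^ k := by rw [← mul_pow]; ring
    _ ≤ (3 * v * q / (4 * t)) ^ k := by
        refine pow_le_pow_left₀ (by positivity) ?_ k
        rw [div_le_div_iff₀ hk0 (by positivity)]
        have : 4 * m * t ≤ v * k := by nlinarith [(Nat.cast_nonneg v : (0 : ℝ) ≤ v)]
        nlinarith

lemma choose_mul_pow_le_ite {m v k : ℕ} {q t : ℝ} (hq : 0 ≤ q) (ht : 5 ≤ t) (hm : 4 * m ≤ v ^ 2)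
    (hk : v * t < k) (hy : 3 * v * q / (4 * t) ≤ 1) :
    (m.choose k : ℝ) * q ^ k ≤ if 21 ≤ v then (3 * v * q / (4 * t)) ^ (5 * v) else 0 := by
  have hk5 : 5 * v < k := by
    have : (5 * v : ℝ) < k := by nlinarith [(Nat.cast_nonneg v : (0 : ℝ) ≤ v)]
    exact_mod_cast this
  split_ifs with hv
  · calc (m.choose k : ℝ) * q ^ k ≤ (3 * v * q / (4 * t)) ^ k :=
          choose_mul_pow_le_of_four_mul_le_sq hq (by linarith) hm hk
      _ ≤ (3 * v * q / (4 * t)) ^ (5 * v) :=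
          pow_le_pow_of_le_one (by positivity) hy hk5.le
  · rw [Nat.choose_eq_zero_of_lt (by nlinarith), Nat.cast_zero, zero_mul]

lemma six_mul_pow_five_le {C γ v n : ℝ} (hC : 0 ≤ C) (hγ : 0 < γ) (hv : 0 ≤ v) (hn : 0 < n)
    (h : 20 * C ^ 5 * v ≤ γ ^ 5 * n) : 6 * (3 * C * v / (4 * γ * n)) ^ 5 ≤ (v / n) ^ 4 := by
  rw [div_pow, div_pow, mul_div_assoc', div_le_div_iff₀ (by positivity) (by positivity)]
  have : 0 ≤ C ^ 5 * v ^ 4 * n ^ 4 := by positivity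
  nlinarith [mul_le_mul_of_nonneg_left h (by positivity : (0 : ℝ) ≤ v ^ 4 * n ^ 4)]

lemma choose_mul_pow_le_inv {C γ α : ℝ} {n j : ℕ} (hC : 0 ≤ C) (hγ : 0 < γ) (hα : α < 1 / 4)
    (hγα : 20 * C ^ 5 * α ≤ γ ^ 5) (hj : 16 ≤ j) (hjn : (j : ℝ) ≤ α * n) :
    ((n + n).choose j : ℝ) * (3 * C * j / (4 * γ * n)) ^ (5 * j) ≤ (4 * (n : ℝ) ^ 15)⁻¹ := by
  have hj0 : (0 : ℝ) < j := by exact_mod_cast (show 0 < j by omega)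
  have h4jn : 4 * j ≤ n := by
    have : (4 * j : ℝ) ≤ n := by nlinarith [(Nat.cast_nonneg n : (0 : ℝ) ≤ n)]
    exact_mod_cast this
  have hn0 : (0 : ℝ) < n := by exact_mod_cast (show 0 < n by omega)
  set y := 3 * C * j / (4 * γ * n)
  have hy : 6 * y ^ 5 ≤ (j / n) ^ 4 := six_mul_pow_five_le hC hγ hj0.le hn0
    (by nlinarith [mul_le_mul_of_nonneg_left hjn (by positivity : (0 : ℝ) ≤ 20 * C ^ 5)])
  have hbase : 3 * ((n + n : ℕ) : ℝ) / j * y ^ 5 ≤ (j / n) ^ 3 :=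
    calc 3 * ((n + n : ℕ) : ℝ) / j * y ^ 5 = (n : ℝ) / j * (6 * y ^ 5) := by push_cast; ring
      _ ≤ (n : ℝ) / j * (j / n) ^ 4 := by gcongr
      _ = (j / n) ^ 3 := by field_simp
  calc ((n + n).choose j : ℝ) * y ^ (5 * j) ≤ (3 * ((n + n : ℕ) : ℝ) / j) ^ j * (y ^ 5) ^ j := by
        rw [pow_mul]; gcongr; exact choose_le_three_mul_div_pow _ _
    _ ≤ ((j / n) ^ 3) ^ j := by rw [← mul_pow]; exact pow_le_pow_left₀ (by positivity) hbase j
    _ ≤ (4 * (n : ℝ) ^ 15)⁻¹ := by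
        rw [← pow_mul, div_pow, ← one_div, div_le_div_iff₀ (by positivity) (by positivity),
          one_mul]
        exact_mod_cast pow_mul_le_pow_of_four_mul_le hj h4jn

lemma sum_choose_mul_pow_lt {C α γ r : ℝ} {n : ℕ} (hn : 0 < n) (hC : 0 ≤ C) (hα : α < 1 / 4)
    (hγ : 0 < γ) (hγα : 20 * C ^ 5 * α ≤ γ ^ 5) (hγr : 5 ≤ γ * r) :
    ∑ V ∈ univ.filter (fun V : Finset (Fin n ⊕ Fin n) => (#V : ℝ) ≤ α * n),
      ((#(edgesWithin n univ V)).choose (⌊#V * (γ * r / n) * n⌋₊ + 1) : ℝ) *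
        (C * r / n) ^ (⌊#V * (γ * r / n) * n⌋₊ + 1)
    < (n : ℝ) ^ (-14 : ℤ) := by
  have hn0 : (0 : ℝ) < n := by exact_mod_cast hn
  have hr : 0 < r := pos_of_mul_pos_right (by linarith) hγ.le
  set y : ℕ → ℝ := fun v => 3 * C * v / (4 * γ * n)
  have hy : ∀ v : ℕ, 3 * v * (C * r / n) / (4 * (γ * r)) = y v := fun v => by
    simp only [y]; field_simp
  have hy1 : ∀ v : ℕ, (v : ℝ) ≤ α * n → y v ≤ 1 := fun v hv => by
    have h6 := six_mul_pow_five_le hC hγ (Nat.cast_nonneg v) hn0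
      (by nlinarith [mul_le_mul_of_nonneg_left hv (by positivity : (0 : ℝ) ≤ 20 * C ^ 5)])
    have hvn : (v : ℝ) / n ≤ 1 := by rw [div_le_one hn0]; nlinarith
    rw [← pow_le_one_iff_of_nonneg (by positivity) (by norm_num : 5 ≠ 0)]
    nlinarith [pow_le_one₀ (by positivity) hvn (n := 4)]
  calc _ ≤ ∑ V ∈ univ.filter (fun V : Finset (Fin n ⊕ Fin n) => (#V : ℝ) ≤ α * n),
          (if 21 ≤ #V then y #V ^ (5 * #V) else 0) := by
        refine sum_le_sum fun V hV => ?_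
        have hV := (mem_filter.1 hV).2
        rw [show (#V : ℝ) * (γ * r / n) * n = #V * (γ * r) by field_simp, ← hy]
        refine choose_mul_pow_le_ite (by positivity) hγr (four_mul_card_edgesWithin_univ_le n V)
          ?_ ((hy _).symm ▸ hy1 _ hV)
        push_cast
        exact Nat.lt_floor_add_one _
    _ = ∑ j ∈ range (n + n + 1), (n + n).choose j •
          (if (j : ℝ) ≤ α * n then (if 21 ≤ j then y j ^ (5 * j) else 0) else 0) := by
        have hcard : #(univ : Finset (Fin n ⊕ Fin n)) = n + n := by simp
        rw [sum_filter, ← powerset_univ, ← hcard]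
        exact sum_powerset_apply_card
          (fun j : ℕ => if (j : ℝ) ≤ α * n then (if 21 ≤ j then y j ^ (5 * j) else 0) else 0)
    _ ≤ ∑ j ∈ range (n + n + 1), (4 * (n : ℝ) ^ 15)⁻¹ := by
        refine sum_le_sum fun j _ => ?_
        rw [nsmul_eq_mul]
        split_ifs with hjn hj
        · exact choose_mul_pow_le_inv hC hγ hα hγα (by omega) hjn
        all_goals simp only [mul_zero]; positivity
    _ < 4 * n * (4 * (n : ℝ) ^ 15)⁻¹ := by
        rw [sum_const, card_range, nsmul_eq_mul]
        have : (1 : ℝ) ≤ n := by exact_mod_cast hn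
        gcongr
        push_cast
        linarith
    _ = (n : ℝ) ^ (-14 : ℤ) := by
        rw [zpow_neg]
        field_simp

theorem stmt_13_general (C α γ r : ℝ) (hC : 1 < C) (hα : α ∈ Set.Ioo (0 : ℝ) (1 / 4))
    (hγ : C * (20 * α) ^ ((1 : ℝ) / 5) < γ) (hr : 5 / γ < r)
    (n : ℕ) (hn : 0 < n)
    (Ω : Type*) [MeasurableSpace Ω] (μ : Measure Ω)
    (H : Ω → Finset (Fin n × Fin n))
    (hspread : ∀ S : Finset (Fin n × Fin n),
      μ {ω | S ⊆ H ω} ≤ ENNReal.ofReal ((C * r / n) ^ S.card)) :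
    μ {ω | ¬ IsSparse n α (γ * r / n) (H ω)} < ENNReal.ofReal ((n : ℝ) ^ (-14 : ℤ)) := by
  obtain ⟨hα0, hα4⟩ := hα
  have hC0 : 0 ≤ C := by linarith
  have hγα : C ^ 5 * (20 * α) < γ ^ 5 :=
    pow_mul_lt_pow_of_mul_rpow_lt (by norm_num) hC0 (by positivity) (by exact_mod_cast hγ)
  have hγ0 : 0 < γ := lt_of_le_of_lt (by positivity) hγ
  have hγr : 5 < γ * r := by rwa [div_lt_iff₀' hγ0] at hr
  have hr0 : 0 < r := pos_of_mul_pos_right (by linarith) hγ0.le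
  calc μ {ω | ¬ IsSparse n α (γ * r / n) (H ω)} ≤ _ :=
        measure_not_isSparse_le μ H (by positivity) (by positivity) hspread
    _ < _ := (ENNReal.ofReal_lt_ofReal_iff (by positivity)).2
        (sum_choose_mul_pow_lt hn hC0 hα4 hγ0 (by linarith) hγr.le)

theorem stmt_13 (C α γ r : ℝ) (hC : 1 < C) (hα : α ∈ Set.Ioo (0 : ℝ) (1 / 4))
    (hγ : C * (20 * α) ^ ((1 : ℝ) / 5) < γ) (hr : 5 / γ < r)
    (n : ℕ) (hn : 0 < n)
    (Ω : Type*) [MeasurableSpace Ω] (μ : Measure Ω) [IsProbabilityMeasure μ]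
    (H : Ω → Finset (Fin n × Fin n))
    (hspread : ∀ S : Finset (Fin n × Fin n),
      μ {ω | S ⊆ H ω} ≤ ENNReal.ofReal ((C * r / n) ^ S.card)) :
    μ {ω | ¬ IsSparse n α (γ * r / n) (H ω)} < ENNReal.ofReal ((n : ℝ) ^ (-14 : ℤ)) :=
  stmt_13_general C α γ r hC hα hγ hr n hn Ω μ H hspread

end Paper
end
end

section
/- Let ℓ ∈ ℕ, q > 0, δ, δ′, η ∈ (0,1) and d > 0. Suppose (H_{i,j} : i ∈ [ℓ], j ∈ [2^{ℓ−i}]) is a random family of pairwise edge-disjoint subgraphs of K_{n,n} such that (i) almost surely every H_{i,j} is (2δ, δ′, η, d/n)-quasirandom, and (ii) the family is q-spread: for all edge sets (S_{i,j} ⊆ U₁ × U₂), ℙ(⋂_{i,j} {S_{i,j} ⊆ H_{i,j}}) ≤ q^{Σ_{i,j} |S_{i,j}|}. Set H_i = ⋃_{j ∈ [2^{ℓ−i}]} H_{i,j} for each i ∈ [ℓ]. Then almost surely each H_i is (2δ, δ′, η, 2^{ℓ−i}d/n)-quasirandom, and for all S_1, …, S_ℓ ⊆ U₁ × U₂ one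 has ℙ(⋂_{i=1}^{ℓ} {S_i ⊆ H_i}) ≤ ∏_{i=1}^{ℓ} (2^{ℓ−i} q)^{|S_i|}; in particular each H_i is (2^{ℓ−i} q)-spread. -/
open MeasureTheory ProbabilityTheory
open scoped ENNReal

noncomputable section

namespace Paper

section Aux

variable {n m : ℕ}

lemma leftDeg_biUnion (G : Fin m → Finset (Fin n × Fin n))
    (hdisj : ∀ j j', j ≠ j' → Disjoint (G j) (G j')) (u : Fin n) :
    leftDeg n (Finset.univ.biUnion G) u = ∑ j, leftDeg n (G j) u := by
  unfold leftDeg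
  rw [Finset.filter_biUnion, Finset.card_biUnion]
  intro j _ j' _ h
  exact (hdisj j j' h).mono (Finset.filter_subset _ _) (Finset.filter_subset _ _)

lemma rightDeg_biUnion (G : Fin m → Finset (Fin n × Fin n))
    (hdisj : ∀ j j', j ≠ j' → Disjoint (G j) (G j')) (v : Fin n) :
    rightDeg n (Finset.univ.biUnion G) v = ∑ j, rightDeg n (G j) v := by
  unfold rightDeg
  rw [Finset.filter_biUnion, Finset.card_biUnion]
  intro j _ j' _ h
  exact (hdisj j j' h).mono (Finset.filter_subset _ _) (Finset.filter_subset _ _)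

lemma edgesBetween_biUnion (G : Fin m → Finset (Fin n × Fin n))
    (hdisj : ∀ j j', j ≠ j' → Disjoint (G j) (G j')) (V₁ V₂ : Finset (Fin n)) :
    ((edgesBetween n (Finset.univ.biUnion G) V₁ V₂).card : ℝ)
      = ∑ j, ((edgesBetween n (G j) V₁ V₂).card : ℝ) := by
  unfold edgesBetween
  rw [Finset.filter_biUnion, Finset.card_biUnion, Nat.cast_sum]
  intro j _ j' _ h
  exact (hdisj j j' h).mono (Finset.filter_subset _ _) (Finset.filter_subset _ _)

lemma edgesWithin_biUnion (G : Fin m → Finset (Fin n × Fin n))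
    (hdisj : ∀ j j', j ≠ j' → Disjoint (G j) (G j')) (V : Finset (Fin n ⊕ Fin n)) :
    ((edgesWithin n (Finset.univ.biUnion G) V).card : ℝ)
      = ∑ j, ((edgesWithin n (G j) V).card : ℝ) := by
  unfold edgesWithin
  rw [Finset.filter_biUnion, Finset.card_biUnion, Nat.cast_sum]
  intro j _ j' _ h
  exact (hdisj j j' h).mono (Finset.filter_subset _ _) (Finset.filter_subset _ _)

lemma quasi_union (δ δ' η d : ℝ)
    (G : Fin m → Finset (Fin n × Fin n))
    (hdisj : ∀ j j', j ≠ j' → Disjoint (G j) (G j'))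
    (hq : ∀ j, IsQuasirandom n (2 * δ) δ' η (d / n) (G j)) :
    IsQuasirandom n (2 * δ) δ' η ((m : ℝ) * d / n) (Finset.univ.biUnion G) := by
  refine ⟨⟨fun u => ?_, fun v => ?_⟩, fun V hV => ?_, fun V₁ V₂ h₁ h₂ => ?_⟩
  · rw [leftDeg_biUnion G hdisj u, Nat.cast_sum]
    constructor
    · calc (1 - 2 * δ) * ((m : ℝ) * d / n) * n = ∑ _j : Fin m, (1 - 2 * δ) * (d / n) * n := by
            rw [Finset.sum_const]; simp; ring
        _ ≤ ∑ j, ((leftDeg n (G j) u : ℝ)) :=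
            Finset.sum_le_sum fun j _ => ((hq j).1.1 u).1
    · calc (∑ j, ((leftDeg n (G j) u : ℝ)))
          ≤ ∑ _j : Fin m, (1 + 2 * δ) * (d / n) * n :=
            Finset.sum_le_sum fun j _ => ((hq j).1.1 u).2
        _ = (1 + 2 * δ) * ((m : ℝ) * d / n) * n := by rw [Finset.sum_const]; simp; ring
  · rw [rightDeg_biUnion G hdisj v, Nat.cast_sum]
    constructor
    · calc (1 - 2 * δ) * ((m : ℝ) * d / n) * n = ∑ _j : Fin m, (1 - 2 * δ) * (d / n) * n := by
            rw [Finset.sum_const]; simp; ring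
        _ ≤ ∑ j, ((rightDeg n (G j) v : ℝ)) :=
            Finset.sum_le_sum fun j _ => ((hq j).1.2 v).1
    · calc (∑ j, ((rightDeg n (G j) v : ℝ)))
          ≤ ∑ _j : Fin m, (1 + 2 * δ) * (d / n) * n :=
            Finset.sum_le_sum fun j _ => ((hq j).1.2 v).2
        _ = (1 + 2 * δ) * ((m : ℝ) * d / n) * n := by rw [Finset.sum_const]; simp; ring
  · rw [edgesWithin_biUnion G hdisj V]
    calc (∑ j, ((edgesWithin n (G j) V).card : ℝ))
        ≤ ∑ _j : Fin m, (V.card : ℝ) * (η * (d / n)) * n :=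
          Finset.sum_le_sum fun j _ => (hq j).2.1 V hV
      _ = (V.card : ℝ) * (η * ((m : ℝ) * d / n)) * n := by rw [Finset.sum_const]; simp; ring
  · rw [edgesBetween_biUnion G hdisj V₁ V₂]
    calc (1 - 2 * δ) * ((m : ℝ) * d / n) * V₁.card * V₂.card
        = ∑ _j : Fin m, (1 - 2 * δ) * (d / n) * V₁.card * V₂.card := by
          rw [Finset.sum_const]; simp; ring
      _ ≤ ∑ j, ((edgesBetween n (G j) V₁ V₂).card : ℝ) :=
          Finset.sum_le_sum fun j _ => (hq j).2.2 V₁ V₂ h₁ h₂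

end Aux

theorem stmt_17 (ℓ n : ℕ) (q : ℝ) (hq : 0 < q)
    (δ δ' η d : ℝ) (hδ : 0 < δ) (hδ' : δ' ∈ Set.Ioo (0 : ℝ) 1)
    (hη : η ∈ Set.Ioo (0 : ℝ) 1) (hd : 0 < d)
    (Ω : Type*) [MeasurableSpace Ω] (μ : Measure Ω) [IsProbabilityMeasure μ]
    (F : Ω → (Σ i : Fin ℓ, Fin (2 ^ (ℓ - 1 - (i : ℕ)))) → Finset (Fin n × Fin n))
    (hdisj : ∀ ω, ∀ p p' : Σ i : Fin ℓ, Fin (2 ^ (ℓ - 1 - (i : ℕ))),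
      p ≠ p' → Disjoint (F ω p) (F ω p'))
    (hquasi : ∀ᵐ ω ∂μ, ∀ p, IsQuasirandom n (2 * δ) δ' η (d / n) (F ω p))
    (hspread : ∀ S : (Σ i : Fin ℓ, Fin (2 ^ (ℓ - 1 - (i : ℕ)))) → Finset (Fin n × Fin n),
      μ {ω | ∀ p, S p ⊆ F ω p} ≤ ENNReal.ofReal (q ^ ∑ p, (S p).card)) :
    (∀ᵐ ω ∂μ, ∀ i : Fin ℓ,
      IsQuasirandom n (2 * δ) δ' η ((2 ^ (ℓ - 1 - (i : ℕ)) : ℝ) * d / n)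
        (Finset.univ.biUnion fun j : Fin (2 ^ (ℓ - 1 - (i : ℕ))) => F ω ⟨i, j⟩)) ∧
    (∀ S : Fin ℓ → Finset (Fin n × Fin n),
      μ {ω | ∀ i : Fin ℓ,
          S i ⊆ Finset.univ.biUnion fun j : Fin (2 ^ (ℓ - 1 - (i : ℕ))) => F ω ⟨i, j⟩}
        ≤ ∏ i : Fin ℓ, ENNReal.ofReal (((2 ^ (ℓ - 1 - (i : ℕ)) : ℝ) * q) ^ (S i).card)) ∧
    ∀ (i : Fin ℓ) (S : Finset (Fin n × Fin n)),
      μ {ω | S ⊆ Finset.univ.biUnion fun j : Fin (2 ^ (ℓ - 1 - (i : ℕ))) => F ω ⟨i, j⟩}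
        ≤ ENNReal.ofReal (((2 ^ (ℓ - 1 - (i : ℕ)) : ℝ) * q) ^ S.card) := by
  classical
  have key : ∀ S : Fin ℓ → Finset (Fin n × Fin n),
      μ {ω | ∀ i : Fin ℓ,
          S i ⊆ Finset.univ.biUnion fun j : Fin (2 ^ (ℓ - 1 - (i : ℕ))) => F ω ⟨i, j⟩}
        ≤ ∏ i : Fin ℓ, ENNReal.ofReal (((2 ^ (ℓ - 1 - (i : ℕ)) : ℝ) * q) ^ (S i).card) := by
    intro S
    set N := ∑ i, (S i).card with hN
    have hcover : {ω | ∀ i : Fin ℓ,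
          S i ⊆ Finset.univ.biUnion fun j : Fin (2 ^ (ℓ - 1 - (i : ℕ))) => F ω ⟨i, j⟩}
        ⊆ ⋃ f : (∀ i : Fin ℓ, {e // e ∈ S i} → Fin (2 ^ (ℓ - 1 - (i : ℕ)))),
          {ω | ∀ (i : Fin ℓ) (e : {e // e ∈ S i}),
            (e : Fin n × Fin n) ∈ F ω ⟨i, f i e⟩} := by
      intro ω hω
      have h : ∀ (i : Fin ℓ) (e : {e // e ∈ S i}),
          ∃ j, (e : Fin n × Fin n) ∈ F ω ⟨i, j⟩ := by
        intro i e
        have := hω i e.2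
        obtain ⟨j, _, hj⟩ := Finset.mem_biUnion.mp this
        exact ⟨j, hj⟩
      choose f hf using h
      exact Set.mem_iUnion.mpr ⟨f, hf⟩
    have hB : ∀ f : (∀ i : Fin ℓ, {e // e ∈ S i} → Fin (2 ^ (ℓ - 1 - (i : ℕ)))),
        μ {ω | ∀ (i : Fin ℓ) (e : {e // e ∈ S i}),
            (e : Fin n × Fin n) ∈ F ω ⟨i, f i e⟩} ≤ ENNReal.ofReal (q ^ N) := by
      intro f
      set T : (Σ i : Fin ℓ, Fin (2 ^ (ℓ - 1 - (i : ℕ)))) → Finset (Fin n × Fin n) :=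
        fun p => ((S p.1).attach.filter fun e => f p.1 e = p.2).map
          ⟨Subtype.val, Subtype.val_injective⟩ with hT
      have hsub : {ω | ∀ (i : Fin ℓ) (e : {e // e ∈ S i}),
            (e : Fin n × Fin n) ∈ F ω ⟨i, f i e⟩} ⊆ {ω | ∀ p, T p ⊆ F ω p} := by
        intro ω hω p e' he'
        obtain ⟨i, j⟩ := p
        simp only [hT, Finset.mem_map, Finset.mem_filter, Finset.mem_attach, true_and,
          Function.Embedding.coeFn_mk] at he'
        obtain ⟨e, hfe, rfl⟩ := he'
        have := hω i e
        rwa [hfe] at this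
      have hsum : ∑ p, (T p).card = N := by
        rw [hN, ← Finset.univ_sigma_univ, Finset.sum_sigma]
        refine Finset.sum_congr rfl fun i _ => ?_
        simp only [hT, Finset.card_map]
        rw [← Finset.card_eq_sum_card_fiberwise (fun e _ => Finset.mem_univ (f i e)),
          Finset.card_attach]
      calc μ {ω | ∀ (i : Fin ℓ) (e : {e // e ∈ S i}),
            (e : Fin n × Fin n) ∈ F ω ⟨i, f i e⟩}
          ≤ μ {ω | ∀ p, T p ⊆ F ω p} := measure_mono hsub
        _ ≤ ENNReal.ofReal (q ^ ∑ p, (T p).card) := hspread T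
        _ = ENNReal.ofReal (q ^ N) := by rw [hsum]
    have hcard : (Fintype.card (∀ i : Fin ℓ, {e // e ∈ S i} → Fin (2 ^ (ℓ - 1 - (i : ℕ)))) : ℝ)
        = ∏ i : Fin ℓ, ((2 : ℝ) ^ (ℓ - 1 - (i : ℕ))) ^ (S i).card := by
      rw [Fintype.card_pi]
      push_cast
      refine Finset.prod_congr rfl fun i _ => ?_
      rw [Fintype.card_fun, Fintype.card_coe, Fintype.card_fin]
      push_cast
      ring
    calc μ {ω | ∀ i : Fin ℓ,
          S i ⊆ Finset.univ.biUnion fun j : Fin (2 ^ (ℓ - 1 - (i : ℕ))) => F ω ⟨i, j⟩}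
        ≤ μ (⋃ f : (∀ i : Fin ℓ, {e // e ∈ S i} → Fin (2 ^ (ℓ - 1 - (i : ℕ)))),
          {ω | ∀ (i : Fin ℓ) (e : {e // e ∈ S i}),
            (e : Fin n × Fin n) ∈ F ω ⟨i, f i e⟩}) := measure_mono hcover
      _ ≤ ∑' f : (∀ i : Fin ℓ, {e // e ∈ S i} → Fin (2 ^ (ℓ - 1 - (i : ℕ)))),
          μ {ω | ∀ (i : Fin ℓ) (e : {e // e ∈ S i}),
            (e : Fin n × Fin n) ∈ F ω ⟨i, f i e⟩} := measure_iUnion_le _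
      _ ≤ ∑' _f : (∀ i : Fin ℓ, {e // e ∈ S i} → Fin (2 ^ (ℓ - 1 - (i : ℕ)))),
          ENNReal.ofReal (q ^ N) := ENNReal.tsum_le_tsum hB
      _ = (Fintype.card (∀ i : Fin ℓ, {e // e ∈ S i} → Fin (2 ^ (ℓ - 1 - (i : ℕ)))) : ℝ≥0∞)
          * ENNReal.ofReal (q ^ N) := by
          rw [tsum_fintype, Finset.sum_const, Finset.card_univ, nsmul_eq_mul]
      _ = ENNReal.ofReal ((Fintype.card
            (∀ i : Fin ℓ, {e // e ∈ S i} → Fin (2 ^ (ℓ - 1 - (i : ℕ)))) : ℝ) * q ^ N) := by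
          rw [ENNReal.ofReal_mul (by positivity), ENNReal.ofReal_natCast]
      _ = ∏ i : Fin ℓ, ENNReal.ofReal (((2 ^ (ℓ - 1 - (i : ℕ)) : ℝ) * q) ^ (S i).card) := by
          rw [← ENNReal.ofReal_prod_of_nonneg fun i _ => by positivity]
          congr 1
          rw [hcard, hN, ← Finset.prod_pow_eq_pow_sum, ← Finset.prod_mul_distrib]
          exact Finset.prod_congr rfl fun i _ => (mul_pow _ _ _).symm
  refine ⟨?_, key, ?_⟩
  · filter_upwards [hquasi] with ω hω i
    have h2 : ((2 ^ (ℓ - 1 - (i : ℕ)) : ℕ) : ℝ) = (2 ^ (ℓ - 1 - (i : ℕ)) : ℝ) := by push_cast; ring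
    have := quasi_union δ δ' η d (fun j : Fin (2 ^ (ℓ - 1 - (i : ℕ))) => F ω ⟨i, j⟩)
      (fun j j' hjj' => hdisj ω ⟨i, j⟩ ⟨i, j'⟩ (by simp [hjj']))
      (fun j => hω ⟨i, j⟩)
    rwa [h2] at this
  · intro i S
    have hmono : {ω | S ⊆ Finset.univ.biUnion fun j : Fin (2 ^ (ℓ - 1 - (i : ℕ))) => F ω ⟨i, j⟩}
        ⊆ {ω | ∀ i' : Fin ℓ,
          (if i' = i then S else ∅)
            ⊆ Finset.univ.biUnion fun j : Fin (2 ^ (ℓ - 1 - (i' : ℕ))) => F ω ⟨i', j⟩} := by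
      intro ω hω i'
      by_cases h : i' = i
      · subst h; simpa using hω
      · simp [h]
    calc μ {ω | S ⊆ Finset.univ.biUnion fun j : Fin (2 ^ (ℓ - 1 - (i : ℕ))) => F ω ⟨i, j⟩}
        ≤ μ {ω | ∀ i' : Fin ℓ,
          (if i' = i then S else ∅)
            ⊆ Finset.univ.biUnion fun j : Fin (2 ^ (ℓ - 1 - (i' : ℕ))) => F ω ⟨i', j⟩} :=
          measure_mono hmono
      _ ≤ ∏ i' : Fin ℓ, ENNReal.ofReal (((2 ^ (ℓ - 1 - (i' : ℕ)) : ℝ) * q)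
            ^ (if i' = i then S else ∅).card) := key _
      _ = ENNReal.ofReal (((2 ^ (ℓ - 1 - (i : ℕ)) : ℝ) * q) ^ S.card) := by
          rw [Finset.prod_eq_single i (fun i' _ h => by simp [h]) (fun h => absurd (Finset.mem_univ i) h)]
          simp

end Paper
end
end

section
/- Suppose X_1, …, X_n and Y_1, …, Y_n are {0,1}-valued random variables such that Y_1, …, Y_n are independent and for each i, almost surely 𝔼[X_i ∣ X_1, …, X_{i−1}] ≤ 𝔼[Y_i]. Let X = Σ_{i=1}^n X_i and Y = Σ_{i=1}^n Y_i. Then for every t ≥ 0 we have ℙ(X ≥ t) ≤ ℙ(Y ≥ t). -/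
/-!
Induct on the number of summands. Adding a `{0,1}`-valued `Z` to `S` pushes it to `t` or above
exactly on `{t ≤ S}` and on `{t - 1 ≤ S < t} ∩ {Z = 1}`, so
`P(t ≤ S + Z) = P(t ≤ S) + E[Z; t - 1 ≤ S < t]`. For the `X`'s the event `{t - 1 ≤ S < t}` is
determined by the earlier `X j`, so the bound on the conditional mean gives
`E[X i; ·] ≤ q P(·)` with `q = E[Y i]`; for the `Y`'s independence gives equality. Hence
`P(t ≤ S + Z) ≤ (1 - q) P(t ≤ S) + q P(t - 1 ≤ S)` on the `X` side, with equality on the `Y` side,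
and the right-hand side is monotone in the two tail probabilities compared by the induction
hypothesis.
-/

open MeasureTheory ProbabilityTheory

lemma indicator_setOf_le_add {α : Type*} {S Z : α → ℝ} (hZ : ∀ a, Z a = 0 ∨ Z a = 1)
    (t : ℝ) (a : α) :
    {x | t ≤ S x + Z x}.indicator 1 a
      = {x | t ≤ S x}.indicator 1 a + (S ⁻¹' Set.Ico (t - 1) t).indicator Z a := by
  unfold Set.indicator
  simp only [Set.mem_ofPred_eq, Set.mem_preimage, Set.mem_Ico, Pi.one_apply]
  rcases hZ a with h | h <;> rw [h] <;> split_ifs <;> grind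

section Tail

variable {α : Type*} [MeasurableSpace α] {μ : Measure α} {S Z : α → ℝ}

lemma integrable_of_zero_or_one [IsFiniteMeasure μ] (hZm : Measurable Z)
    (hZ : ∀ a, Z a = 0 ∨ Z a = 1) : Integrable Z μ :=
  .of_bound hZm.aestronglyMeasurable 1 <| .of_forall fun a => by
    rcases hZ a with h | h <;> simp [h]

lemma integral_mem_Icc_of_zero_or_one [IsProbabilityMeasure μ] (hZm : Measurable Z)
    (hZ : ∀ a, Z a = 0 ∨ Z a = 1) : ∫ x, Z x ∂μ ∈ Set.Icc 0 1 := by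
  have hZ01 : ∀ a, 0 ≤ Z a ∧ Z a ≤ 1 := fun a => by rcases hZ a with h | h <;> simp [h]
  refine ⟨integral_nonneg fun a => (hZ01 a).1, ?_⟩
  calc ∫ x, Z x ∂μ ≤ ∫ _, (1 : ℝ) ∂μ :=
        integral_mono (integrable_of_zero_or_one hZm hZ) (integrable_const 1) fun a => (hZ01 a).2
    _ = 1 := by simp

variable [IsFiniteMeasure μ]

lemma measureReal_setOf_le_add (hS : Measurable S) (hZm : Measurable Z)
    (hZ : ∀ a, Z a = 0 ∨ Z a = 1) (t : ℝ) :
    μ.real {x | t ≤ S x + Z x}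
      = μ.real {x | t ≤ S x} + ∫ x in S ⁻¹' Set.Ico (t - 1) t, Z x ∂μ := by
  have hSt : MeasurableSet {x | t ≤ S x} := measurableSet_le measurable_const hS
  have hSZt : MeasurableSet {x | t ≤ S x + Z x} := measurableSet_le measurable_const (hS.add hZm)
  have hF : MeasurableSet (S ⁻¹' Set.Ico (t - 1) t) := hS measurableSet_Ico
  rw [← integral_indicator_one hSZt, ← integral_indicator_one hSt, ← integral_indicator hF]
  exact (integral_congr_ae (.of_forall (indicator_setOf_le_add hZ t))).trans
    (integral_add ((integrable_const 1).indicator hSt)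
      ((integrable_of_zero_or_one hZm hZ).indicator hF))

lemma measureReal_preimage_Ico_sub_one (hS : Measurable S) (t : ℝ) :
    μ.real (S ⁻¹' Set.Ico (t - 1) t) = μ.real {x | t - 1 ≤ S x} - μ.real {x | t ≤ S x} := by
  have hsub : {x | t ≤ S x} ⊆ {x | t - 1 ≤ S x} := fun x (hx : t ≤ S x) =>
    show t - 1 ≤ S x by linarith
  have hdiff : S ⁻¹' Set.Ico (t - 1) t = {x | t - 1 ≤ S x} \ {x | t ≤ S x} := by
    ext x; simp [and_comm]
  rw [hdiff, measureReal_sdiff hsub (measurableSet_le measurable_const hS)]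

end Tail

lemma setIntegral_le_of_condExp_le {α : Type*} {m m₀ : MeasurableSpace α} {μ : Measure α}
    [IsFiniteMeasure μ] {f : α → ℝ} {q : ℝ} (hm : m ≤ m₀) (hf : Integrable f μ)
    (hq : ∀ᵐ x ∂μ, μ[f | m] x ≤ q) {s : Set α} (hs : MeasurableSet[m] s) :
    ∫ x in s, f x ∂μ ≤ q * μ.real s :=
  calc ∫ x in s, f x ∂μ = ∫ x in s, μ[f | m] x ∂μ := (setIntegral_condExp hm hf hs).symm
    _ ≤ ∫ _ in s, q ∂μ := setIntegral_mono_ae integrable_condExp.integrableOn integrableOn_const hq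
    _ = q * μ.real s := by rw [setIntegral_const, smul_eq_mul, mul_comm]

lemma ProbabilityTheory.IndepFun.setIntegral_preimage_eq {Ω β : Type*} [MeasurableSpace Ω]
    [MeasurableSpace β] {μ : Measure Ω} {S : Ω → β} {Z : Ω → ℝ} (hSZ : IndepFun S Z μ)
    (hS : Measurable S) (hZ : AEStronglyMeasurable Z μ) {B : Set β} (hB : MeasurableSet B) :
    ∫ x in S ⁻¹' B, Z x ∂μ = μ.real (S ⁻¹' B) * ∫ x, Z x ∂μ := by
  have hind : IndepFun (B.indicator (1 : β → ℝ) ∘ S) Z μ :=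
    hSZ.comp ((measurable_const (a := (1 : ℝ))).indicator hB) measurable_id
  have hmul : (S ⁻¹' B).indicator Z = (B.indicator 1 ∘ S) * Z := by
    ext x; by_cases hx : S x ∈ B <;> simp [hx]
  have hone : (S ⁻¹' B).indicator (1 : Ω → ℝ) = B.indicator 1 ∘ S := by
    ext x; by_cases hx : S x ∈ B <;> simp [hx]
  rw [← integral_indicator (hS hB), ← integral_indicator_one (hS hB), hmul, hone]
  exact hind.integral_mul_eq_mul_integral
    ((measurable_const.indicator hB).comp hS).aestronglyMeasurable hZ

lemma measureReal_setOf_le_add_le {α β : Type*} [MeasurableSpace α] [MeasurableSpace β]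
    {μ : Measure α} {ν : Measure β} [IsFiniteMeasure μ] [IsFiniteMeasure ν]
    {S Z : α → ℝ} {S' Z' : β → ℝ} (hS : Measurable S) (hZm : Measurable Z)
    (hZ : ∀ a, Z a = 0 ∨ Z a = 1) (hS' : Measurable S') (hZ'm : Measurable Z')
    (hZ' : ∀ b, Z' b = 0 ∨ Z' b = 1) {q : ℝ} (hq : q ∈ Set.Icc 0 1)
    (hle : ∀ t, μ.real {x | t ≤ S x} ≤ ν.real {y | t ≤ S' y}) (t : ℝ)
    (hZq : ∫ x in S ⁻¹' Set.Ico (t - 1) t, Z x ∂μ ≤ q * μ.real (S ⁻¹' Set.Ico (t - 1) t))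
    (hZ'q : ∫ y in S' ⁻¹' Set.Ico (t - 1) t, Z' y ∂ν = q * ν.real (S' ⁻¹' Set.Ico (t - 1) t)) :
    μ.real {x | t ≤ S x + Z x} ≤ ν.real {y | t ≤ S' y + Z' y} := by
  rw [measureReal_setOf_le_add hS hZm hZ, measureReal_setOf_le_add hS' hZ'm hZ', hZ'q,
    measureReal_preimage_Ico_sub_one hS']
  rw [measureReal_preimage_Ico_sub_one hS] at hZq
  nlinarith [mul_le_mul_of_nonneg_left (hle (t - 1)) hq.1,
    mul_le_mul_of_nonneg_left (hle t) (sub_nonneg.2 hq.2)]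

section PartialSum

variable {Ω : Type*} {n : ℕ}

def partialSum (X : Fin n → Ω → ℝ) (k : ℕ) (ω : Ω) : ℝ := ∑ j : Fin n with j.val < k, X j ω

lemma partialSum_zero (X : Fin n → Ω → ℝ) : partialSum X 0 = 0 := by
  ext; simp [partialSum]

lemma partialSum_self (X : Fin n → Ω → ℝ) : partialSum X n = fun ω => ∑ i, X i ω := by
  ext; simp [partialSum]

lemma partialSum_succ (X : Fin n → Ω → ℝ) (i : Fin n) :
    partialSum X (i.val + 1) = partialSum X i + X i := by
  have hfilter : Finset.univ.filter (fun j : Fin n => j.val < i.val + 1)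
      = insert i (Finset.univ.filter fun j : Fin n => j.val < i.val) := by
    ext j
    simp only [Finset.mem_filter, Finset.mem_univ, true_and, Finset.mem_insert, Fin.ext_iff]
    omega
  ext ω
  rw [partialSum, hfilter, Finset.sum_insert (by simp), add_comm]
  rfl

lemma measurable_partialSum_iSup_comap (X : Fin n → Ω → ℝ) (k : ℕ) :
    Measurable[⨆ j : Fin n, ⨆ _ : (j : ℕ) < k, MeasurableSpace.comap (X j) inferInstance]
      (partialSum X k) :=
  Finset.measurable_fun_sum _ fun j hj =>
    Measurable.of_comap_le (le_iSup₂_of_le j (Finset.mem_filter.1 hj).2 le_rfl)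

variable [MeasurableSpace Ω]

lemma measurable_partialSum (X : Fin n → Ω → ℝ) (hX : ∀ i, Measurable (X i)) (k : ℕ) :
    Measurable (partialSum X k) :=
  Finset.measurable_fun_sum _ fun j _ => hX j

lemma ProbabilityTheory.iIndepFun.indepFun_partialSum {μ : Measure Ω} {Y : Fin n → Ω → ℝ}
    (hY : iIndepFun Y μ) (hYm : ∀ i, Measurable (Y i)) (i : Fin n) :
    IndepFun (partialSum Y i) (Y i) μ := by
  have hsum : partialSum Y i = ∑ j : Fin n with j.val < i.val, Y j := by
    ext; simp [partialSum, Finset.sum_apply]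
  rw [hsum]
  exact hY.indepFun_finsetSum_of_notMem hYm (by simp)

end PartialSum

theorem measureReal_partialSum_le {Ω Ω' : Type*} [MeasurableSpace Ω] [MeasurableSpace Ω']
    {μ : Measure Ω} [IsProbabilityMeasure μ] {μ' : Measure Ω'} [IsProbabilityMeasure μ']
    {n : ℕ} {X : Fin n → Ω → ℝ} {Y : Fin n → Ω' → ℝ}
    (hX01 : ∀ i ω, X i ω = 0 ∨ X i ω = 1) (hY01 : ∀ i ω', Y i ω' = 0 ∨ Y i ω' = 1)
    (hXmeas : ∀ i, Measurable (X i)) (hYmeas : ∀ i, Measurable (Y i))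
    (hYindep : iIndepFun Y μ')
    (hcond : ∀ i : Fin n, ∀ᵐ ω ∂μ,
      (μ[X i | ⨆ j : Fin n, ⨆ _ : (j : ℕ) < (i : ℕ),
        MeasurableSpace.comap (X j) inferInstance]) ω ≤ ∫ ω', Y i ω' ∂μ')
    (k : ℕ) (hk : k ≤ n) (t : ℝ) :
    μ.real {ω | t ≤ partialSum X k ω} ≤ μ'.real {ω' | t ≤ partialSum Y k ω'} := by
  induction k generalizing t with
  | zero => by_cases ht : t ≤ 0 <;> simp [partialSum_zero, ht]
  | succ k ih =>
    obtain ⟨i, rfl⟩ : ∃ i : Fin n, i.val = k := ⟨⟨k, hk⟩, rfl⟩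
    have hm : (⨆ j : Fin n, ⨆ _ : (j : ℕ) < (i : ℕ),
        MeasurableSpace.comap (X j) inferInstance) ≤ ‹MeasurableSpace Ω› :=
      iSup₂_le fun j _ => (hXmeas j).comap_le
    have hYq := (hYindep.indepFun_partialSum hYmeas i).setIntegral_preimage_eq
      (measurable_partialSum Y hYmeas i) (hYmeas i).aestronglyMeasurable
      (measurableSet_Ico (a := t - 1) (b := t))
    rw [partialSum_succ, partialSum_succ]
    exact measureReal_setOf_le_add_le (measurable_partialSum X hXmeas i) (hXmeas i) (hX01 i)
      (measurable_partialSum Y hYmeas i) (hYmeas i) (hY01 i)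
      (integral_mem_Icc_of_zero_or_one (hYmeas i) (hY01 i)) (ih (by omega)) t
      (setIntegral_le_of_condExp_le hm (integrable_of_zero_or_one (hXmeas i) (hX01 i)) (hcond i)
        (measurable_partialSum_iSup_comap X i measurableSet_Ico))
      (hYq.trans (mul_comm _ _))

/-- Stochastic domination of a sequence of `{0,1}`-valued random variables whose
conditional means are bounded by the means of independent Bernoulli variables. -/
theorem stmt_18 {Ω Ω' : Type*} [MeasurableSpace Ω] [MeasurableSpace Ω']
    (μ : Measure Ω) [IsProbabilityMeasure μ]
    (μ' : Measure Ω') [IsProbabilityMeasure μ']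
    (n : ℕ) (X : Fin n → Ω → ℝ) (Y : Fin n → Ω' → ℝ)
    (hX01 : ∀ i ω, X i ω = 0 ∨ X i ω = 1)
    (hY01 : ∀ i ω', Y i ω' = 0 ∨ Y i ω' = 1)
    (hXmeas : ∀ i, Measurable (X i))
    (hYmeas : ∀ i, Measurable (Y i))
    (hYindep : ProbabilityTheory.iIndepFun Y μ')
    (hcond : ∀ i : Fin n, ∀ᵐ ω ∂μ,
      (μ[X i | ⨆ j : Fin n, ⨆ _ : (j : ℕ) < (i : ℕ),
        MeasurableSpace.comap (X j) inferInstance]) ω ≤ ∫ ω', Y i ω' ∂μ') :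
    ∀ t : ℝ, 0 ≤ t →
      μ {ω | t ≤ ∑ i, X i ω} ≤ μ' {ω' | t ≤ ∑ i, Y i ω'} := by
  intro t _
  have h := measureReal_partialSum_le hX01 hY01 hXmeas hYmeas hYindep hcond n le_rfl t
  simp only [partialSum_self] at h
  exact (ENNReal.toReal_le_toReal (measure_ne_top _ _) (measure_ne_top _ _)).1 h
end
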